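/- For all integers N ≥ 2 and M ≥ 1, if F is a plane forest with exactly N leaves whose height is at most M, then every entry a_i (1 ≤ i ≤ N−1) of the separation array of F satisfies 1 ≤ a_i ≤ M. (This is the existence half of Theorem 1(1): every hierarchical organization with N leaf nodes and maximum depth M has a well-defined array representation lying in {1,…,M}^{N−1}.) -/
import Mathlib


/-- A rooted plane tree: a node carrying a finite ordered list of child subtrees.
A node with no children is a leaf. -/
inductive PTree : Type where
  | node : List PTree → PTree

namespace PTree

mutual
/-- Number of leaves of a plane tree. -/
def leaves : PTree → ℕ
  | .node [] => 1
  | .node (c :: cs) => c.leaves + leavesList cs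

/-- Total number of leaves of a list of plane trees. -/
def leavesList : List PTree → ℕ
  | [] => 0
  | c :: cs => c.leaves + leavesList cs
end

mutual
/-- Height of a plane tree (a single leaf has height 1). -/
def height : PTree → ℕ
  | .node [] => 1
  | .node (c :: cs) => 1 + max c.height (heightList cs)

/-- Maximum height among a list of plane trees (0 for the empty list). -/
def heightList : List PTree → ℕ
  | [] => 0
  | c :: cs => max c.height (heightList cs)
end

mutual
/-- Separation levels between consecutive leaves inside a tree whose root is at level `l`:
between two consecutive leaves lying in distinct children we record `l+1`
(one more than the level of their lowest common ancestor, which is the root). -/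
def enc : PTree → ℕ → List ℕ
  | .node [], _ => []
  | .node (c :: cs), l => c.enc (l + 1) ++ encList cs (l + 1)

/-- Separation levels for a list of sibling subtrees all at level `l`, including
the separator `l` between consecutive subtrees. -/
def encList : List PTree → ℕ → List ℕ
  | [], _ => []
  | c :: cs, l => (l :: c.enc l) ++ encList cs l
end

end PTree

/-- Total number of leaves of a plane forest. -/
def forestLeaves (F : List PTree) : ℕ := PTree.leavesList F

/-- Height of a plane forest: the maximum level of any of its nodes (roots are at level 1). -/
def forestHeight (F : List PTree) : ℕ := PTree.heightList F

/-- The separation array of a plane forest: for each pair of consecutive leaves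
(numbered left to right), the level at which they separate (`1` if they lie in
different trees, and `1 +` the level of their lowest common ancestor otherwise). -/
def forestSep : List PTree → List ℕ
  | [] => []
  | t :: ts => t.enc 1 ++ PTree.encList ts 1

namespace PTree

mutual
theorem leaves_pos : ∀ t : PTree, 1 ≤ t.leaves
  | .node [] => le_refl 1
  | .node (c :: cs) => by
      have := leaves_pos c
      simp only [leaves]; omega

theorem leavesList_nil_aux : ∀ _ : List PTree, True
  | _ => trivial
end

mutual
theorem height_pos : ∀ t : PTree, 1 ≤ t.height
  | .node [] => le_refl 1
  | .node (c :: cs) => by simp only [height]; omega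

theorem height_pos_aux : ∀ _ : List PTree, True
  | _ => trivial
end

theorem heightList_pos : ∀ t ts, t ∈ ts → (1 : ℕ) ≤ heightList ts
  | t, c :: cs, h => by
    have := height_pos c
    simp only [heightList]
    rcases List.mem_cons.1 h with rfl | h
    · omega
    · have := heightList_pos t cs h; omega

mutual
theorem enc_length : ∀ (t : PTree) (l : ℕ), (t.enc l).length = t.leaves - 1
  | .node [], _ => rfl
  | .node (c :: cs), l => by
      have h1 := enc_length c (l + 1)
      have h2 := encList_length cs (l + 1)
      have h3 := leaves_pos c
      simp only [enc, leaves, List.length_append, h1, h2]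
      omega

theorem encList_length : ∀ (ts : List PTree) (l : ℕ),
    (encList ts l).length = leavesList ts
  | [], _ => rfl
  | c :: cs, l => by
      have h1 := enc_length c l
      have h2 := encList_length cs l
      have h3 := leaves_pos c
      simp only [encList, leavesList, List.length_append, List.length_cons, h1, h2]
      omega
end

mutual
theorem enc_bounds : ∀ (t : PTree) (l : ℕ), ∀ x ∈ t.enc l,
    l + 1 ≤ x ∧ x ≤ l - 1 + t.height
  | .node [], _ => by simp [enc]
  | .node (c :: cs), l => by
      intro x hx
      simp only [enc, List.mem_append] at hx
      simp only [height]
      rcases hx with hx | hx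
      · have := enc_bounds c (l + 1) x hx
        omega
      · have := encList_bounds cs (l + 1) x hx
        omega

theorem encList_bounds : ∀ (ts : List PTree) (l : ℕ), ∀ x ∈ encList ts l,
    l ≤ x ∧ x ≤ l - 1 + heightList ts
  | [], _ => by simp [encList]
  | c :: cs, l => by
      intro x hx
      have hc := height_pos c
      simp only [encList, List.cons_append, List.mem_cons, List.mem_append] at hx
      simp only [heightList]
      rcases hx with rfl | hx | hx
      · omega
      · have := enc_bounds c l x hx
        omega
      · have := encList_bounds cs l x hx
        omega
end

end PTree

/-- existence half of Theorem 1(1).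
For all integers `N ≥ 2` and `M ≥ 1`, if `F` is a plane forest with exactly `N` leaves
whose height is at most `M`, then its separation array is a well-defined element of
`{1,…,M}^(N-1)`: it has length `N - 1` and every entry `a_i` satisfies `1 ≤ a_i ≤ M`. -/
theorem sepArray_mem_valid_range (N M : ℕ) (hN : 2 ≤ N) (hM : 1 ≤ M)
    (F : List PTree) (hF : F ≠ [])
    (hleaves : forestLeaves F = N) (hheight : forestHeight F ≤ M) :
    (forestSep F).length = N - 1 ∧ ∀ x ∈ forestSep F, 1 ≤ x ∧ x ≤ M := by
  obtain ⟨t, ts, rfl⟩ := List.exists_cons_of_ne_nil hF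
  simp only [forestLeaves, PTree.leavesList] at hleaves
  simp only [forestHeight, PTree.heightList] at hheight
  have ht := PTree.height_pos t
  constructor
  · simp only [forestSep, List.length_append, PTree.enc_length, PTree.encList_length]
    have := PTree.leaves_pos t
    omega
  · intro x hx
    simp only [forestSep, List.mem_append] at hx
    rcases hx with hx | hx
    · have := PTree.enc_bounds t 1 x hx
      omega
    · have := PTree.encList_bounds ts 1 x hx
      omega
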